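/- Let D be an independent dominating set of a graph G on vertex set {v_1,...,v_n}, and let G' be obtained from G by attaching to each v_i a path v_i – a_i – b_i with new vertices a_i, b_i. Then the set D ∪ {a_i : v_i ∉ D} ∪ {b_i : v_i ∈ D} is an independent secure dominating set of G' of size n + |D|. -/

import Mathlib

/-!
Each pendant path `vᵢ – aᵢ – bᵢ` meets the set in `aᵢ` when `vᵢ ∉ D` and in `vᵢ, bᵢ` when
`vᵢ ∈ D`. This gives the size `n + |D|`, and the only edges that could lie inside the set are
edges of `G` inside `D`. A vertex outside the set is swapped with the neighbour that dominates it: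
`vᵢ ∉ D` with a `D`-neighbour `vⱼ`, `aᵢ` (for `vᵢ ∈ D`) with `vᵢ`, and `bᵢ` (for `vᵢ ∉ D`) with
`aᵢ`. A swap can only undominate the closed neighbourhood of the removed vertex, and there
domination is restored through the pendant paths; independence of `D` puts the `G`-neighbours of
`vᵢ ∈ D` outside `D`, so they keep their own `aⱼ`.
-/

variable {V : Type*} [Fintype V] [DecidableEq V]

/-- `S` is a dominating set of `G`: every vertex is in `S` or adjacent to a vertex of `S`. -/
def DomSet (G : SimpleGraph V) (S : Finset V) : Prop :=
  ∀ v : V, v ∈ S ∨ ∃ u ∈ S, G.Adj u v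

/-- `S` is a secure dominating set of `G`. -/
def SecDomSet (G : SimpleGraph V) (S : Finset V) : Prop :=
  DomSet G S ∧ ∀ u ∉ S, ∃ v ∈ S, G.Adj u v ∧ DomSet G (insert u (S.erase v))

/-- `S` is an independent set of `G`. -/
def IndepSet (G : SimpleGraph V) (S : Finset V) : Prop :=
  ∀ a ∈ S, ∀ b ∈ S, ¬ G.Adj a b

/-- `S` is an independent secure dominating set of `G`. -/
def InSDS (G : SimpleGraph V) (S : Finset V) : Prop :=
  IndepSet G S ∧ SecDomSet G S

/-- The independent secure domination number `γ_is(G)`. -/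
noncomputable def gammaIS (G : SimpleGraph V) : ℕ :=
  sInf {k | ∃ S : Finset V, InSDS G S ∧ S.card = k}

/-- `G` with a pendant path `vᵢ – aᵢ – bᵢ` attached to each vertex `vᵢ`:
`aᵢ = Sum.inr (Sum.inl i)`, `bᵢ = Sum.inr (Sum.inr i)`. -/
def extPath2 (G : SimpleGraph V) : SimpleGraph (V ⊕ V ⊕ V) :=
  SimpleGraph.fromRel (fun x y =>
    (∃ a b, x = Sum.inl a ∧ y = Sum.inl b ∧ G.Adj a b) ∨
    (∃ a, x = Sum.inl a ∧ y = Sum.inr (Sum.inl a)) ∨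
    (∃ a, x = Sum.inr (Sum.inl a) ∧ y = Sum.inr (Sum.inr a)))

section Swap

variable {α : Type*} [DecidableEq α]

lemma DomSet.insert_erase {G : SimpleGraph α} {S : Finset α} {u v : α} (hS : DomSet G S)
    (hv : ∀ x, (x = v ∨ G.Adj v x) →
      x ∈ insert u (S.erase v) ∨ ∃ w ∈ insert u (S.erase v), G.Adj w x) :
    DomSet G (insert u (S.erase v)) := by
  intro x
  by_cases hx : x = v ∨ G.Adj v x
  · exact hv x hx
  push Not at hx
  rcases hS x with hxS | ⟨w, hwS, hwx⟩
  · exact .inl (Finset.mem_insert_of_mem (Finset.mem_erase.2 ⟨hx.1, hxS⟩))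
  · refine .inr ⟨w, Finset.mem_insert_of_mem (Finset.mem_erase.2 ⟨?_, hwS⟩), hwx⟩
    rintro rfl
    exact hx.2 hwx

end Swap

open Sum

namespace extPath2

variable {G : SimpleGraph V} {a b : V}

omit [Fintype V] [DecidableEq V]

@[simp] lemma adj_inl_inl : (extPath2 G).Adj (inl a) (inl b) ↔ G.Adj a b := by
  simp only [extPath2, SimpleGraph.fromRel_adj]
  simpa [G.adj_comm b a] using G.ne_of_adj

@[simp] lemma adj_inl_inr_inl : (extPath2 G).Adj (inl a) (inr (inl b)) ↔ a = b := by
  simp [extPath2, eq_comm]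

@[simp] lemma adj_inr_inl_inl : (extPath2 G).Adj (inr (inl a)) (inl b) ↔ a = b := by
  rw [SimpleGraph.adj_comm, adj_inl_inr_inl]
  exact eq_comm

@[simp] lemma adj_inr_inl_inr_inr : (extPath2 G).Adj (inr (inl a)) (inr (inr b)) ↔ a = b := by
  simp [extPath2, eq_comm]

@[simp] lemma adj_inr_inr_inr_inl : (extPath2 G).Adj (inr (inr a)) (inr (inl b)) ↔ a = b := by
  rw [SimpleGraph.adj_comm, adj_inr_inl_inr_inr]
  exact eq_comm

@[simp] lemma not_adj_inl_inr_inr : ¬ (extPath2 G).Adj (inl a) (inr (inr b)) := by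
  simp [extPath2]

@[simp] lemma not_adj_inr_inr_inl : ¬ (extPath2 G).Adj (inr (inr a)) (inl b) := by
  simp [extPath2]

@[simp] lemma not_adj_inr_inl_inr_inl : ¬ (extPath2 G).Adj (inr (inl a)) (inr (inl b)) := by
  simp [extPath2]

@[simp] lemma not_adj_inr_inr_inr_inr : ¬ (extPath2 G).Adj (inr (inr a)) (inr (inr b)) := by
  simp [extPath2]

end extPath2

def extPath2Set (D : Finset V) : Finset (V ⊕ V ⊕ V) :=
  D.image inl ∪ (Finset.univ \ D).image (fun v => inr (inl v)) ∪ D.image (fun v => inr (inr v))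

namespace extPath2Set

open extPath2

variable {G : SimpleGraph V} {D : Finset V} {v : V}

@[simp] lemma inl_mem : inl v ∈ extPath2Set D ↔ v ∈ D := by
  simp [extPath2Set]

@[simp] lemma inr_inl_mem : inr (inl v) ∈ extPath2Set D ↔ v ∉ D := by
  simp [extPath2Set]

@[simp] lemma inr_inr_mem : inr (inr v) ∈ extPath2Set D ↔ v ∈ D := by
  simp [extPath2Set]

lemma card_eq : (extPath2Set D).card = Fintype.card V + D.card := by
  rw [extPath2Set, Finset.card_union_of_disjoint, Finset.card_union_of_disjoint]
  · rw [Finset.card_image_of_injective _ inl_injective,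
      Finset.card_image_of_injective _ (fun _ _ h => by simpa using h),
      Finset.card_image_of_injective _ (fun _ _ h => by simpa using h),
      Finset.card_univ_sdiff]
    have := D.card_le_univ
    omega
  · simp [Finset.disjoint_left]
  · simp [Finset.disjoint_left]

lemma indepSet (hind : IndepSet G D) : IndepSet (extPath2 G) (extPath2Set D) := by
  rintro (a | a | a) ha (b | b | b) hb hab <;>
    simp only [inl_mem, inr_inl_mem, inr_inr_mem, adj_inl_inl, adj_inl_inr_inl, adj_inr_inl_inl,
      adj_inr_inl_inr_inr, adj_inr_inr_inr_inl, not_adj_inl_inr_inr, not_adj_inr_inr_inl,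
      not_adj_inr_inl_inr_inl, not_adj_inr_inr_inr_inr] at ha hb hab
  · exact hind a ha b hb hab
  all_goals simp_all

lemma domSet (hdom : DomSet G D) : DomSet (extPath2 G) (extPath2Set D) := by
  rintro (v | v | v)
  · by_cases hv : v ∈ D
    · exact .inl (by simpa)
    obtain ⟨t, ht, htv⟩ := (hdom v).resolve_left hv
    exact .inr ⟨inl t, by simpa, by simpa⟩
  · by_cases hv : v ∈ D
    · exact .inr ⟨inl v, by simpa, by simp⟩
    · exact .inl (by simpa)
  · by_cases hv : v ∈ D
    · exact .inl (by simpa)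
    · exact .inr ⟨inr (inl v), by simpa, by simp⟩

lemma exists_swap_inl (hdom : DomSet G D) (hv : v ∉ D) :
    ∃ w ∈ extPath2Set D, (extPath2 G).Adj (inl v) w ∧
      DomSet (extPath2 G) (insert (inl v) ((extPath2Set D).erase w)) := by
  obtain ⟨t, ht, htv⟩ := (hdom v).resolve_left hv
  refine ⟨inl t, by simpa, by simpa using htv.symm, (domSet hdom).insert_erase ?_⟩
  rintro (y | y | y) hy <;> simp only [inl.injEq, reduceCtorEq, false_or, or_self,
    adj_inl_inl, adj_inl_inr_inl, not_adj_inl_inr_inr] at hy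
  · rcases hy with rfl | hty
    · exact .inr ⟨inl v, Finset.mem_insert_self _ _, by simpa using htv.symm⟩
    by_cases hy : y ∈ D
    · exact .inl (by simp [hy, hty.ne'])
    · exact .inr ⟨inr (inl y), by simp [hy], by simp⟩
  · subst hy
    exact .inr ⟨inr (inr t), by simp [ht], by simp⟩

lemma exists_swap_inr_inl (hind : IndepSet G D) (hdom : DomSet G D) (hv : v ∈ D) :
    ∃ w ∈ extPath2Set D, (extPath2 G).Adj (inr (inl v)) w ∧
      DomSet (extPath2 G) (insert (inr (inl v)) ((extPath2Set D).erase w)) := by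
  refine ⟨inl v, by simpa, by simp, (domSet hdom).insert_erase ?_⟩
  rintro (y | y | y) hy <;> simp only [inl.injEq, reduceCtorEq, false_or, or_self,
    adj_inl_inl, adj_inl_inr_inl, not_adj_inl_inr_inr] at hy
  · rcases hy with rfl | hvy
    · exact .inr ⟨inr (inl y), Finset.mem_insert_self _ _, by simp⟩
    have hy : y ∉ D := fun hy => hind v hv y hy hvy
    exact .inr ⟨inr (inl y), by simp [hy], by simp⟩
  · subst hy
    exact .inl (Finset.mem_insert_self _ _)

lemma exists_swap_inr_inr (hdom : DomSet G D) (hv : v ∉ D) :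
    ∃ w ∈ extPath2Set D, (extPath2 G).Adj (inr (inr v)) w ∧
      DomSet (extPath2 G) (insert (inr (inr v)) ((extPath2Set D).erase w)) := by
  refine ⟨inr (inl v), by simpa, by simp, (domSet hdom).insert_erase ?_⟩
  rintro (y | y | y) hy <;> simp only [inl.injEq, inr.injEq, reduceCtorEq, false_or, or_false,
    adj_inr_inl_inl, adj_inr_inl_inr_inr, not_adj_inr_inl_inr_inl] at hy
  · subst hy
    obtain ⟨t, ht, htv⟩ := (hdom v).resolve_left hv
    exact .inr ⟨inl t, by simp [ht], by simpa⟩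
  · subst hy
    exact .inr ⟨inr (inr y), Finset.mem_insert_self _ _, by simp⟩
  · subst hy
    exact .inl (Finset.mem_insert_self _ _)

lemma inSDS (hind : IndepSet G D) (hdom : DomSet G D) :
    InSDS (extPath2 G) (extPath2Set D) := by
  refine ⟨indepSet hind, domSet hdom, ?_⟩
  rintro (v | v | v) hu <;> simp only [inl_mem, inr_inl_mem, inr_inr_mem, not_not] at hu
  · exact exists_swap_inl hdom hu
  · exact exists_swap_inr_inl hind hdom hu
  · exact exists_swap_inr_inr hdom hu

end extPath2Set

theorem stmt13 (G : SimpleGraph V) (D : Finset V)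
    (hind : IndepSet G D) (hdom : DomSet G D) :
    InSDS (extPath2 G)
      ((D.image (Sum.inl : V → V ⊕ V ⊕ V)) ∪
        ((Finset.univ \ D).image (fun v : V => (Sum.inr (Sum.inl v) : V ⊕ V ⊕ V))) ∪
        (D.image (fun v : V => (Sum.inr (Sum.inr v) : V ⊕ V ⊕ V)))) ∧
    ((D.image (Sum.inl : V → V ⊕ V ⊕ V)) ∪
        ((Finset.univ \ D).image (fun v : V => (Sum.inr (Sum.inl v) : V ⊕ V ⊕ V))) ∪
        (D.image (fun v : V => (Sum.inr (Sum.inr v) : V ⊕ V ⊕ V)))).card =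
      Fintype.card V + D.card :=
  ⟨extPath2Set.inSDS hind hdom, extPath2Set.card_eq⟩
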